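/- Let K be a field of characteristic zero and H ∈ K[x]ⁿ = K[x_1,...,x_n]ⁿ. If (JH)|_{x=y⁽ʳ⁾} ··· (JH)|_{x=y⁽¹⁾} = 0 for fresh indeterminate tuples, then for every j with 1 ≤ j ≤ r, the polynomial map (JH)|_{x=y⁽ʳ⁾} ··· (JH)|_{x=y⁽ʲ⁺¹⁾} · H(y⁽ʲ⁾ + H(y⁽ʲ⁻¹⁾ + ··· + H(y⁽¹⁾)···)) is constant with respect to y⁽¹⁾. -/

import Mathlib

/-!
Write `uₛ = y⁽ˢ⁾ + nest H s` (tuples indexed from `0`), so that `nest H (s + 1) = H(uₛ)`, and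
`Aₛ = (JH)(uₛ)`. By the chain rule, the Jacobian of `nest H j` with respect to `y⁽⁰⁾` is
`A_{j-1} ⋯ A₀`. Substituting `y⁽ˢ⁾ ↦ uₛ` for all `s < j` in `(JH)(y⁽ʳ⁻¹⁾) ⋯ (JH)(y⁽⁰⁾) = 0` fixes the
factors with `s ≥ j` and so gives `tailProd H j r · A_{j-1} ⋯ A₀ = 0`. Since `tailProd H j r` does
not involve `y⁽⁰⁾` when `j ≥ 1`, this product is exactly the `y⁽⁰⁾`-Jacobian of
`tailProd H j r · nest H j`.
-/

open MvPolynomial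

/-- Substitute the `i`-th fresh tuple of indeterminates for `x` in every entry of `M`. -/
noncomputable def substN {K : Type} [CommRing K] {n m : ℕ}
    (M : Matrix (Fin m) (Fin m) (MvPolynomial (Fin n) K)) (i : ℕ) :
    Matrix (Fin m) (Fin m) (MvPolynomial (ℕ × Fin n) K) :=
  M.map (rename fun k => (i, k))

/-- The product `M|_{x=y⁽ʳ⁾} ⬝ ⋯ ⬝ M|_{x=y⁽¹⁾}` (fresh tuples indexed `r-1, …, 0`). -/
noncomputable def prodSubst {K : Type} [CommRing K] {n m : ℕ}
    (M : Matrix (Fin m) (Fin m) (MvPolynomial (Fin n) K)) (r : ℕ) :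
    Matrix (Fin m) (Fin m) (MvPolynomial (ℕ × Fin n) K) :=
  ((List.range r).reverse.map (substN M)).prod

/-- The Jacobian matrix `(∂H_i/∂x_j)` of a polynomial map `H`. -/
noncomputable def jac {K : Type} [CommRing K] {n : ℕ}
    (H : Fin n → MvPolynomial (Fin n) K) :
    Matrix (Fin n) (Fin n) (MvPolynomial (Fin n) K) :=
  Matrix.of fun i j => pderiv j (H i)

/-- The nested composition `H(y⁽ʲ⁾ + H(y⁽ʲ⁻¹⁾ + ⋯ + H(y⁽¹⁾)⋯))`,
with the fresh tuple `y⁽ⁱ⁾` realized as the variables `X (i-1, ·)`. -/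
noncomputable def nest {K : Type} [CommRing K] {n : ℕ}
    (H : Fin n → MvPolynomial (Fin n) K) : ℕ → Fin n → MvPolynomial (ℕ × Fin n) K
  | 0 => 0
  | j + 1 => fun i => aeval (fun k => X (j, k) + nest H j k) (H i)

/-- The product `(JH)|_{x=y⁽ʳ⁾} ⬝ ⋯ ⬝ (JH)|_{x=y⁽ʲ⁺¹⁾}` (fresh tuples indexed `r-1, …, j`). -/
noncomputable def tailProd {K : Type} [CommRing K] {n : ℕ}
    (H : Fin n → MvPolynomial (Fin n) K) (j r : ℕ) :
    Matrix (Fin n) (Fin n) (MvPolynomial (ℕ × Fin n) K) :=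
  (((List.range' j (r - j)).reverse).map (substN (jac H))).prod

lemma MvPolynomial.pderiv_aeval {R σ τ : Type*} [CommSemiring R] [Fintype σ]
    (g : σ → MvPolynomial τ R) (d : τ) (f : MvPolynomial σ R) :
    pderiv d (aeval g f) = ∑ l, aeval g (pderiv l f) * pderiv d (g l) := by
  classical
  induction f using MvPolynomial.induction_on with
  | C a => simp
  | add p q hp hq => simp only [map_add, hp, hq, add_mul, Finset.sum_add_distrib]
  | mul_X p l hp =>
    simp only [map_mul, map_add, aeval_X, pderiv_mul, hp, pderiv_X, Pi.single_apply, mul_ite,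
      mul_one, mul_zero, apply_ite (aeval g), map_zero, add_mul, ite_mul, zero_mul,
      Finset.sum_add_distrib, Finset.sum_ite_eq, Finset.mem_univ, if_true, Finset.sum_mul]
    simp only [mul_right_comm _ (g l)]

lemma MvPolynomial.pderiv_rename_of_notMem_range {R σ τ : Type*} [CommSemiring R]
    (f : σ → τ) {d : τ} (hd : d ∉ Set.range f) (p : MvPolynomial σ R) :
    pderiv d (rename f p) = 0 := by
  classical
  refine pderiv_eq_zero_of_notMem_vars fun h => hd ?_
  obtain ⟨m, -, rfl⟩ := Finset.mem_image.mp (vars_rename f p h)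
  exact ⟨m, rfl⟩

lemma Derivation.list_prod_apply_eq_zero {R A ι : Type*} [CommSemiring R] [CommSemiring A]
    [Algebra R A] [Fintype ι] [DecidableEq ι] (D : Derivation R A A)
    (L : List (Matrix ι ι A)) (hL : ∀ M ∈ L, ∀ i j, D (M i j) = 0) (i j : ι) :
    D (L.prod i j) = 0 := by
  refine List.prod_induction (fun M : Matrix ι ι A => ∀ i j, D (M i j) = 0) ?_ ?_ hL i j
  · intro M N hM hN i j
    simp [Matrix.mul_apply, hM, hN]
  · intro i j
    rcases eq_or_ne i j with rfl | h <;> simp [*]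

variable {K : Type} [CommRing K] {n : ℕ}

lemma substN_map_aeval {m : ℕ} {S : Type} [CommRing S] [Algebra K S]
    (M : Matrix (Fin m) (Fin m) (MvPolynomial (Fin n) K)) (g : ℕ × Fin n → S) (t : ℕ) :
    (substN M t).map (aeval g) = M.map (aeval fun k => g (t, k)) := by
  ext i l
  simp [substN, aeval_rename, Function.comp_def]

section Nest

variable (H : Fin n → MvPolynomial (Fin n) K)

noncomputable def nestArg (s : ℕ) : Fin n → MvPolynomial (ℕ × Fin n) K :=
  fun m => X (s, m) + nest H s m

lemma nest_succ (s : ℕ) (i : Fin n) : nest H (s + 1) i = aeval (nestArg H s) (H i) := rfl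

noncomputable def jacAt (s : ℕ) : Matrix (Fin n) (Fin n) (MvPolynomial (ℕ × Fin n) K) :=
  (jac H).map (aeval (nestArg H s))

noncomputable def jacAtProd (t : ℕ) : Matrix (Fin n) (Fin n) (MvPolynomial (ℕ × Fin n) K) :=
  ((List.range t).reverse.map (jacAt H)).prod

lemma jacAtProd_succ (t : ℕ) : jacAtProd H (t + 1) = jacAt H t * jacAtProd H t := by
  simp [jacAtProd, List.range_succ]

lemma pderiv_nestArg (s : ℕ) (i k : Fin n) :
    pderiv ((0 : ℕ), k) (nestArg H s i) = jacAtProd H s i k := by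
  induction s generalizing i with
  | zero =>
    simp [nestArg, nest, jacAtProd, pderiv_X, Pi.single_apply, Matrix.one_apply]
  | succ s ih =>
    rw [nestArg, map_add, pderiv_X_of_ne (by simp), zero_add, nest_succ, pderiv_aeval,
      jacAtProd_succ, Matrix.mul_apply]
    simp only [ih, jacAt, jac, Matrix.map_apply, Matrix.of_apply]

lemma pderiv_nest_succ (s : ℕ) (i k : Fin n) :
    pderiv ((0 : ℕ), k) (nest H (s + 1) i) = jacAtProd H (s + 1) i k := by
  rw [← pderiv_nestArg, nestArg, map_add, pderiv_X_of_ne (by simp), zero_add]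

end Nest

section Substitution

variable (H : Fin n → MvPolynomial (Fin n) K) {j : ℕ}

noncomputable def nestSubst (j : ℕ) : ℕ × Fin n → MvPolynomial (ℕ × Fin n) K :=
  fun p => if p.1 < j then nestArg H p.1 p.2 else X p

lemma substN_map_nestSubst_of_lt {t : ℕ} (ht : t < j) :
    (substN (jac H) t).map (aeval (nestSubst H j)) = jacAt H t := by
  have hg : (fun k => nestSubst H j (t, k)) = nestArg H t := funext fun _ => if_pos ht
  rw [substN_map_aeval, hg, jacAt]

lemma substN_map_nestSubst_of_le {t : ℕ} (ht : j ≤ t) :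
    (substN (jac H) t).map (aeval (nestSubst H j)) = substN (jac H) t := by
  have hg : (fun k => nestSubst H j (t, k)) = X ∘ (t, ·) := funext fun _ => if_neg (not_lt.2 ht)
  rw [substN_map_aeval, hg, substN, rename_eq_aeval]

lemma prodSubst_map_nestSubst :
    (prodSubst (jac H) j).map (aeval (nestSubst H j)) = jacAtProd H j := by
  rw [← AlgHom.mapMatrix_apply, prodSubst, map_list_prod, List.map_map, jacAtProd]
  refine congrArg List.prod (List.map_congr_left fun t ht => ?_)
  exact substN_map_nestSubst_of_lt H (List.mem_range.1 (List.mem_reverse.1 ht))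

lemma tailProd_map_nestSubst (r : ℕ) :
    (tailProd H j r).map (aeval (nestSubst H j)) = tailProd H j r := by
  rw [← AlgHom.mapMatrix_apply, tailProd, map_list_prod, List.map_map]
  refine congrArg List.prod (List.map_congr_left fun t ht => ?_)
  exact substN_map_nestSubst_of_le H (List.mem_range'_1.1 (List.mem_reverse.1 ht)).1

lemma prodSubst_eq_tailProd_mul {r : ℕ} (hjr : j ≤ r) :
    prodSubst (jac H) r = tailProd H j r * prodSubst (jac H) j := by
  obtain ⟨d, rfl⟩ := Nat.exists_eq_add_of_le hjr
  simp [prodSubst, tailProd, List.range_add, List.range'_eq_map_range]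

lemma tailProd_mul_jacAtProd_eq_zero {r : ℕ} (h0 : prodSubst (jac H) r = 0) (hjr : j ≤ r) :
    tailProd H j r * jacAtProd H j = 0 := by
  have h := congrArg (aeval (nestSubst H j)).mapMatrix (prodSubst_eq_tailProd_mul H hjr)
  rwa [h0, map_zero, map_mul, AlgHom.mapMatrix_apply, AlgHom.mapMatrix_apply,
    tailProd_map_nestSubst, prodSubst_map_nestSubst, eq_comm] at h

end Substitution

lemma pderiv_tailProd_apply (H : Fin n → MvPolynomial (Fin n) K) {j : ℕ} (hj : 1 ≤ j)
    (r : ℕ) (k i l : Fin n) : pderiv ((0 : ℕ), k) (tailProd H j r i l) = 0 := by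
  refine Derivation.list_prod_apply_eq_zero _ _ (fun M hM i l => ?_) i l
  obtain ⟨t, ht, rfl⟩ := List.mem_map.1 hM
  have ht0 : t ≠ 0 := by have := (List.mem_range'_1.1 (List.mem_reverse.1 ht)).1; omega
  exact pderiv_rename_of_notMem_range _ (fun ⟨_, h⟩ => ht0 (congrArg Prod.fst h)) _

theorem stmt5 {K : Type} [Field K] {n r : ℕ}
    (H : Fin n → MvPolynomial (Fin n) K)
    (h0 : prodSubst (jac H) r = 0) :
    ∀ j : ℕ, 1 ≤ j → j ≤ r → ∀ i : Fin n, ∀ k : Fin n,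
      pderiv ((0 : ℕ), k) (((tailProd H j r).mulVec (nest H j)) i) = 0 := by
  intro j hj hjr i k
  obtain ⟨s, rfl⟩ : ∃ s, j = s + 1 := ⟨j - 1, by omega⟩
  have hzero := congrFun (congrFun (tailProd_mul_jacAtProd_eq_zero H h0 hjr) i) k
  simp only [Matrix.mulVec, dotProduct, map_sum, pderiv_mul, pderiv_tailProd_apply H hj,
    zero_mul, zero_add, pderiv_nest_succ]
  rwa [Matrix.mul_apply] at hzero
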